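/- Sufficiency of centipedes for nested knowledge in fip: if K_{i_0} φ holds at (r,t) and there is a centipede for ⟨i_0,...,i_k⟩ in (r,t..t'), then K_{i_k} K_{i_{k−1}} ⋯ K_{i_1} K_{i_0}(at_t(K_{i_0} φ)) holds at (r,t'). -/
import Mathlib


/-- Knowledge via indistinguishability of local states. -/
def K {R σ P : Type*} (L : P → R → ℕ → σ) (i : P) (φ : R → ℕ → Prop)
    (r : R) (t : ℕ) : Prop :=
  ∀ r' t', L i r' t' = L i r t → φ r' t'

/-- `Nested L i k ψ` is the nested knowledge formula K_{i_k} K_{i_{k−1}} ⋯ K_{i_0} ψ. -/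
def Nested {R σ P : Type*} (L : P → R → ℕ → σ) (i : ℕ → P) :
    ℕ → (R → ℕ → Prop) → (R → ℕ → Prop)
  | 0, ψ => K L (i 0) ψ
  | h + 1, ψ => K L (i (h + 1)) (Nested L i h ψ)

/-- A centipede for ⟨i_0,…,i_k⟩ in (r, t..t'). -/
structure Centipede {R P : Type*} (syncR : R → P × ℕ → P × ℕ → Prop)
    (guar : P × ℕ → P × ℕ → Prop) (r : R)
    (k : ℕ) (i : ℕ → P) (t t' : ℕ) (θ : ℕ → P × ℕ) : Prop where
  first : θ 0 = (i 0, t)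
  last : θ k = (i k, t')
  chain : ∀ h < k, syncR r (θ h) (θ (h + 1))
  legs : ∀ h, 1 ≤ h → h ≤ k - 1 → guar (θ h) (i h, t')

/-- Sufficiency of centipedes for nested knowledge gain in fip: if K_{i_0} φ
holds at (r,t) and a centipede for ⟨i_0,…,i_k⟩ exists in (r,t..t'), then
K_{i_k} K_{i_{k−1}} ⋯ K_{i_1} K_{i_0}(at_t(K_{i_0} φ)) holds at (r,t'). -/
theorem stmt19 {R σ P : Type*} (L : P → R → ℕ → σ)
    (syncR : R → P × ℕ → P × ℕ → Prop)
    (guar : P × ℕ → P × ℕ → Prop)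
    (htime : ∀ (i : P) (r r' : R) (s s' : ℕ), L i r s = L i r' s' → s = s')
    (hgs : ∀ (r : R) (α β : P × ℕ), guar α β → syncR r α β)
    (hcomp : ∀ (r : R) (i : P) (ti : ℕ) (j : P) (tj : ℕ) (l : P) (tl : ℕ)
      (ψ : R → ℕ → Prop),
      syncR r (i, ti) (j, tj) → guar (j, tj) (l, tl) → K L i ψ r ti →
      K L j (fun r' _ => K L l (fun r'' _ => K L i ψ r'' ti) r' tl) r tj)
    (hguar_time : ∀ (i : P) (t1 t2 : ℕ), t1 ≤ t2 → guar (i, t1) (i, t2))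
    (k : ℕ) (i : ℕ → P) (t t' : ℕ) (ht : t ≤ t') (θ : ℕ → P × ℕ) (r : R)
    (φ : R → ℕ → Prop)
    (hK : K L (i 0) φ r t)
    (hc : Centipede syncR guar r k i t t' θ) :
    Nested L i k (fun r' _ => K L (i 0) φ r' t) r t' := by
  set ψ₀ : R → ℕ → Prop := fun r' _ => K L (i 0) φ r' t with hψ₀
  -- extend the legs to include the head of the centipede (node k), via reflexivity
  have legs' : ∀ h, 1 ≤ h → h ≤ k → guar (θ h) (i h, t') := by
    intro h h1 hk'
    rcases eq_or_lt_of_le hk' with rfl | hlt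
    · rw [hc.last]; exact hguar_time _ t' t' le_rfl
    · exact hc.legs h h1 (Nat.le_sub_one_of_lt hlt)
  -- main induction along the body of the centipede
  have main : ∀ h, h ≤ k →
      K L (θ h).1 (fun r' _ => Nested L i h ψ₀ r' t') r (θ h).2 := by
    intro h
    induction h with
    | zero =>
      intro _
      have hsync : syncR r (i 0, t) (i 0, t) := hgs r _ _ (hguar_time _ t t le_rfl)
      have hguar : guar (i 0, t) (i 0, t') := hguar_time _ t t' ht
      have hbase := hcomp r (i 0) t (i 0) t (i 0) t' φ hsync hguar hK
      rw [hc.first]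
      exact hbase
    | succ h ih =>
      intro hk1
      have ihh := ih (Nat.le_of_succ_le hk1)
      have hsync : syncR r ((θ h).1, (θ h).2) ((θ (h+1)).1, (θ (h+1)).2) := by
        rw [Prod.mk.eta, Prod.mk.eta]; exact hc.chain h hk1
      have hguar : guar ((θ (h+1)).1, (θ (h+1)).2) (i (h+1), t') := by
        rw [Prod.mk.eta]; exact legs' (h+1) (Nat.succ_le_succ (Nat.zero_le h)) hk1
      have hstep := hcomp r (θ h).1 (θ h).2 (θ (h+1)).1 (θ (h+1)).2 (i (h+1)) t'
        (fun r' _ => Nested L i h ψ₀ r' t') hsync hguar ihh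
      intro r₂ t₂ heq
      have hX := hstep r₂ t₂ heq
      show Nested L i (h+1) ψ₀ r₂ t'
      intro r₃ t₃ heq₃
      have ht₃ : t₃ = t' := htime (i (h+1)) r₃ r₂ t₃ t' heq₃
      subst ht₃
      exact hX r₃ t₃ heq₃ r₃ (θ h).2 rfl
  have hfin := main k le_rfl
  rw [hc.last] at hfin
  exact hfin r t' rfl
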